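/- The natural numbers ℕ, with the usual order, addition and multiplication, form a prestreak, and for every prestreak X there exists exactly one prestreak morphism ι : ℕ → X; it is given inductively by ι(0) = 0 and ι(n+1) = ι(n) + 1. Moreover, ι is injective. -/

import Mathlib

/-- A prestreak: a strict order (asymmetric and cotransitive) together with a
commutative additive monoid structure and a commutative multiplicative monoid
structure on the positive part, compatible with the order.  (The intrinsic
topology conditions of the paper are omitted, being vacuous in the classical
set-theoretic setting.) -/
structure Prestreak (X : Type*) where
  lt : X → X → Prop
  add : X → X → X
  zero : X
  mul : X → X → X
  one : X
  lt_asymm : ∀ a b, ¬ (lt a b ∧ lt b a)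
  lt_cotrans : ∀ a b x, lt a b → lt a x ∨ lt x b
  add_comm : ∀ a b, add a b = add b a
  add_assoc : ∀ a b c, add (add a b) c = add a (add b c)
  add_zero : ∀ a, add a zero = a
  zero_lt_one : lt zero one
  mul_pos : ∀ a b, lt zero a → lt zero b → lt zero (mul a b)
  mul_comm : ∀ a b, lt zero a → lt zero b → mul a b = mul b a
  mul_assoc : ∀ a b c, lt zero a → lt zero b → lt zero c →
    mul (mul a b) c = mul a (mul b c)
  mul_one : ∀ a, lt zero a → mul a one = a
  mul_add : ∀ a b c, lt zero a → lt zero b → lt zero c →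
    mul (add a b) c = add (mul a c) (mul b c)
  add_lt_add_iff : ∀ a b x, (lt (add a x) (add b x) ↔ lt a b)
  mul_lt_mul_iff : ∀ a b x, lt zero a → lt zero b → lt zero x →
    (lt (mul a x) (mul b x) ↔ lt a b)

namespace Prestreak

variable {X : Type*}

/-- Multiplication by a natural number: `0·a = 0`, `(n+1)·a = n·a + a`. -/
def nsmul (P : Prestreak X) : ℕ → X → X
  | 0, _ => P.zero
  | n + 1, a => P.add (nsmul P n a) a

/-- The canonical image of a natural number, `n ↦ n·1`. -/
def ofNat (P : Prestreak X) (n : ℕ) : X := P.nsmul n P.one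

/-- Comparison `x < q` of an element of a prestreak with a rational number,
using the canonical representation `q = (q.num⁺ − q.num⁻)/q.den`:
`x < (a−b)/c  :=  c·x + b < a`. -/
def ltQ (P : Prestreak X) (x : X) (q : ℚ) : Prop :=
  P.lt (P.add (P.nsmul q.den x) (P.ofNat ((-q.num).toNat))) (P.ofNat q.num.toNat)

/-- Comparison `q < x` of a rational with an element of a prestreak:
`(a−b)/c < x  :=  a < c·x + b`. -/
def qLt (P : Prestreak X) (q : ℚ) (x : X) : Prop :=
  P.lt (P.ofNat q.num.toNat) (P.add (P.nsmul q.den x) (P.ofNat ((-q.num).toNat)))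

/-- The archimedean property for prestreaks. -/
def Archimedean (P : Prestreak X) : Prop :=
  ∀ a b c d : X, P.lt b d →
    ∃ n : ℕ, P.lt (P.add a (P.nsmul n b)) (P.add c (P.nsmul n d))

/-- Tightness: antisymmetry of `≤` (where `a ≤ b := ¬ b < a`).
A streak is a tight archimedean prestreak. -/
def Tight (P : Prestreak X) : Prop :=
  ∀ a b : X, ¬ P.lt a b → ¬ P.lt b a → a = b

/-- The apartness relation `a # b := a < b ∨ b < a`. -/
def Apart (P : Prestreak X) (a b : X) : Prop := P.lt a b ∨ P.lt b a

/-- A morphism of prestreaks: preserves `<`, `+`, `0`, `1` and products of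
positive elements. -/
def IsHom {Y : Type*} (P : Prestreak X) (Q : Prestreak Y) (f : X → Y) : Prop :=
  (∀ a b, P.lt a b → Q.lt (f a) (f b)) ∧
  (∀ a b, f (P.add a b) = Q.add (f a) (f b)) ∧
  f P.zero = Q.zero ∧ f P.one = Q.one ∧
  (∀ a b, P.lt P.zero a → P.lt P.zero b → f (P.mul a b) = Q.mul (f a) (f b))

/-- A multiplicative structure on a prestreak: a total multiplication which is
commutative, associative, distributes over addition, has unit `1`, restricts to
the given multiplication on positive elements, and satisfies the multiplicity
condition. -/
def IsMultiplicative (P : Prestreak X) (tmul : X → X → X) : Prop :=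
  (∀ a b, tmul a b = tmul b a) ∧
  (∀ a b c, tmul (tmul a b) c = tmul a (tmul b c)) ∧
  (∀ a b c, tmul (P.add a b) c = P.add (tmul a c) (tmul b c)) ∧
  (∀ a, tmul a P.one = a) ∧
  (∀ a b, P.lt P.zero a → P.lt P.zero b → tmul a b = P.mul a b) ∧
  (∀ a b c d, P.lt b a → P.lt d c →
    P.lt (P.add (tmul a d) (tmul b c)) (P.add (tmul a c) (tmul b d)))

end Prestreak

/-- The natural numbers with their usual order, addition and multiplication
form a prestreak. -/
def natPrestreak : Prestreak ℕ where
  lt := (· < ·)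
  add := (· + ·)
  zero := 0
  mul := (· * ·)
  one := 1
  lt_asymm := by intro a b; omega
  lt_cotrans := by intro a b x h; omega
  add_comm := Nat.add_comm
  add_assoc := Nat.add_assoc
  add_zero := Nat.add_zero
  zero_lt_one := Nat.zero_lt_one
  mul_pos := fun a b ha hb => Nat.mul_pos ha hb
  mul_comm := fun a b _ _ => Nat.mul_comm a b
  mul_assoc := fun a b c _ _ _ => Nat.mul_assoc a b c
  mul_one := fun a _ => Nat.mul_one a
  mul_add := fun a b c _ _ _ => Nat.add_mul a b c
  add_lt_add_iff := fun _ _ _ => Nat.add_lt_add_iff_right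
  mul_lt_mul_iff := fun a b x _ _ hx => by
    first
    | exact mul_lt_mul_iff_of_pos_right hx
    | exact Nat.mul_lt_mul_right hx

/-!
The morphism is `n ↦ n·1`. Translation invariance of `<` turns `0 < 1` into `n·1 < (n+1)·1`,
so by cotransitivity the map is strictly monotone, hence injective because `<` is irreflexive.
Additivity is induction on the second summand and multiplicativity is induction on the first
factor using distributivity; uniqueness holds because an additive map is determined by its
value at `1`.
-/

namespace Prestreak

variable {X : Type*} (P : Prestreak X)

lemma zero_add (a : X) : P.add P.zero a = a := by
  rw [P.add_comm, P.add_zero]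

lemma one_mul {a : X} (ha : P.lt P.zero a) : P.mul P.one a = a := by
  rw [P.mul_comm _ _ P.zero_lt_one ha, P.mul_one _ ha]

lemma lt_irrefl (a : X) : ¬ P.lt a a :=
  fun h => P.lt_asymm a a ⟨h, h⟩

lemma lt_trans {a b c : X} (hab : P.lt a b) (hbc : P.lt b c) : P.lt a c :=
  (P.lt_cotrans a b c hab).resolve_right fun hcb => P.lt_asymm b c ⟨hbc, hcb⟩

lemma ofNat_zero : P.ofNat 0 = P.zero := rfl

lemma ofNat_succ (n : ℕ) : P.ofNat (n + 1) = P.add (P.ofNat n) P.one := rfl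

lemma ofNat_one : P.ofNat 1 = P.one := by
  rw [P.ofNat_succ, P.ofNat_zero, P.zero_add]

lemma ofNat_lt_ofNat_succ (n : ℕ) : P.lt (P.ofNat n) (P.ofNat (n + 1)) := by
  have h := (P.add_lt_add_iff P.zero P.one (P.ofNat n)).mpr P.zero_lt_one
  rwa [P.zero_add, P.add_comm] at h

lemma ofNat_strictMono {m n : ℕ} (h : m < n) : P.lt (P.ofNat m) (P.ofNat n) := by
  induction n, h using Nat.le_induction with
  | base => exact P.ofNat_lt_ofNat_succ m
  | succ n _ ih => exact P.lt_trans ih (P.ofNat_lt_ofNat_succ n)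

lemma ofNat_pos {n : ℕ} (h : 0 < n) : P.lt P.zero (P.ofNat n) :=
  P.ofNat_strictMono h

lemma ofNat_injective : Function.Injective P.ofNat := by
  intro m n h
  by_contra hne
  rcases Nat.lt_or_gt_of_ne hne with hmn | hnm
  · exact P.lt_irrefl _ (h ▸ P.ofNat_strictMono hmn)
  · exact P.lt_irrefl _ (h ▸ P.ofNat_strictMono hnm)

lemma ofNat_add (m n : ℕ) : P.ofNat (m + n) = P.add (P.ofNat m) (P.ofNat n) := by
  induction n with
  | zero => rw [Nat.add_zero, P.ofNat_zero, P.add_zero]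
  | succ n ih => rw [← Nat.add_assoc, P.ofNat_succ, ih, P.add_assoc, ← P.ofNat_succ]

lemma ofNat_mul {m n : ℕ} (hm : 0 < m) (hn : 0 < n) :
    P.ofNat (m * n) = P.mul (P.ofNat m) (P.ofNat n) := by
  induction m, hm using Nat.le_induction with
  | base => rw [Nat.one_mul, P.ofNat_one, P.one_mul (P.ofNat_pos hn)]
  | succ m hm ih =>
    rw [Nat.succ_mul, P.ofNat_add, ih, P.ofNat_succ,
      P.mul_add _ _ _ (P.ofNat_pos hm) P.zero_lt_one (P.ofNat_pos hn),
      P.one_mul (P.ofNat_pos hn)]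

lemma isHom_ofNat : natPrestreak.IsHom P P.ofNat :=
  ⟨fun _ _ h => P.ofNat_strictMono h, P.ofNat_add, P.ofNat_zero, P.ofNat_one,
    fun _ _ hm hn => P.ofNat_mul hm hn⟩

lemma eq_ofNat_of_map_add {g : ℕ → X} (h_add : ∀ m n, g (m + n) = P.add (g m) (g n))
    (h_zero : g 0 = P.zero) (h_one : g 1 = P.one) : g = P.ofNat := by
  funext n
  induction n with
  | zero => exact h_zero
  | succ n ih => rw [h_add, ih, h_one, P.ofNat_succ]

lemma IsHom.eq_ofNat {g : ℕ → X} (hg : natPrestreak.IsHom P g) : g = P.ofNat :=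
  P.eq_ofNat_of_map_add hg.2.1 hg.2.2.1 hg.2.2.2.1

end Prestreak

/-- `ℕ` is the initial prestreak: for every prestreak `X` there is exactly one
prestreak morphism `ι : ℕ → X`; it is given inductively by `ι(0) = 0` and
`ι(n+1) = ι(n) + 1`, and it is injective. -/
theorem nat_initial_prestreak {X : Type*} (P : Prestreak X) :
    ∃ f : ℕ → X, natPrestreak.IsHom P f ∧
      (∀ g : ℕ → X, natPrestreak.IsHom P g → g = f) ∧
      f 0 = P.zero ∧ (∀ n : ℕ, f (n + 1) = P.add (f n) P.one) ∧
      Function.Injective f :=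
  ⟨P.ofNat, P.isHom_ofNat, fun _ hg => hg.eq_ofNat P, P.ofNat_zero,
    P.ofNat_succ, P.ofNat_injective⟩
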